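/- Let m : ℝ³ → ℝ³ be twice continuously differentiable (ContDiff ℝ 2) with ‖m(x)‖ = 1 for all x ∈ ℝ³. Define the emergent magnetic field b : ℝ³ → ℝ³ by b₁ = ⟪m, ∂₂m × ∂₃m⟫, b₂ = ⟪m, ∂₃m × ∂₁m⟫, b₃ = ⟪m, ∂₁m × ∂₂m⟫ (i.e., b_i = ½ ε_{ijk} m·(∂_j m × ∂_k m)). Then the emergent Gauß law holds: Σ_{i=1}^{3} ∂_i b_i(x) = 0 for all x ∈ ℝ³. -/

import Mathlib

open scoped RealInnerProductSpace

noncomputable section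

/-- ℝ³ as a Euclidean space. -/
abbrev E3 := EuclideanSpace ℝ (Fin 3)

/-- Partial derivative in the `k`-th standard coordinate direction. -/
noncomputable def pd {F : Type*} [NormedAddCommGroup F] [NormedSpace ℝ F]
    (k : Fin 3) (f : E3 → F) (x : E3) : F :=
  fderiv ℝ f x (EuclideanSpace.single k 1)

/-- Cross product on ℝ³. -/
noncomputable def cross3 (a b : E3) : E3 :=
  (WithLp.equiv 2 (Fin 3 → ℝ)).symm
    (crossProduct ((WithLp.equiv 2 (Fin 3 → ℝ)) a) ((WithLp.equiv 2 (Fin 3 → ℝ)) b))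

/-- The emergent magnetic field `b_i = ½ ε_{ijk} m·(∂_j m × ∂_k m)`
(indices here are 0-based: `b₁ = m·(∂₂m × ∂₃m)` etc.). -/
noncomputable def emb (m : E3 → E3) (x : E3) : E3 :=
  (WithLp.equiv 2 (Fin 3 → ℝ)).symm
    ![⟪m x, cross3 (pd 1 m x) (pd 2 m x)⟫,
      ⟪m x, cross3 (pd 2 m x) (pd 0 m x)⟫,
      ⟪m x, cross3 (pd 0 m x) (pd 1 m x)⟫]

/-!
Differentiating `b_i = ⟪m, ∂_j m × ∂_k m⟫` by the product rule, the terms with second derivatives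
of `m` cancel in pairs, by symmetry of second derivatives and antisymmetry of the cross product.
The remaining terms are triple products of first derivatives. Differentiating `‖m‖² = 1` shows that
every `∂_k m` is orthogonal to `m`, so the three first derivatives lie in a plane and their triple
product vanishes.
-/

open Matrix

theorem dotProduct_cross_eq_zero_of_orthogonal {R : Type*} [CommRing R] [NoZeroDivisors R]
    {a u v w : Fin 3 → R} (ha : a ⬝ᵥ a ≠ 0) (hu : a ⬝ᵥ u = 0) (hv : a ⬝ᵥ v = 0)
    (hw : a ⬝ᵥ w = 0) : u ⬝ᵥ (v ⨯₃ w) = 0 := by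
  have h_cross : a ⨯₃ (v ⨯₃ w) = 0 := by
    rw [cross_cross_eq_smul_sub_smul', hw, dotProduct_comm, hv, zero_smul, zero_smul, sub_zero]
  have h_parallel : (a ⬝ᵥ a) • (v ⨯₃ w) = (a ⬝ᵥ (v ⨯₃ w)) • a := by
    have := cross_cross_eq_smul_sub_smul' a a (v ⨯₃ w)
    rwa [h_cross, map_zero, eq_comm, sub_eq_zero, eq_comm] at this
  have := congrArg (u ⬝ᵥ ·) h_parallel
  simp only [dotProduct_smul, smul_eq_mul, dotProduct_comm u a, hu, mul_zero] at this
  exact (mul_eq_zero.mp this).resolve_left ha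

theorem real_inner_eq_dotProduct (x y : E3) : ⟪x, y⟫ = x.ofLp ⬝ᵥ y.ofLp := by
  rw [EuclideanSpace.inner_eq_star_dotProduct, dotProduct_comm, star_trivial]

theorem inner_cross3 (a b c : E3) : ⟪a, cross3 b c⟫ = a.ofLp ⬝ᵥ (b.ofLp ⨯₃ c.ofLp) :=
  real_inner_eq_dotProduct a (cross3 b c)

theorem inner_cross3_swap (a b c : E3) : ⟪a, cross3 c b⟫ = -⟪a, cross3 b c⟫ := by
  rw [inner_cross3, inner_cross3, ← cross_anticomm, dotProduct_neg]

theorem inner_cross3_eq_zero_of_orthogonal {a u v w : E3} (ha : a ≠ 0) (hu : ⟪a, u⟫ = 0)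
    (hv : ⟪a, v⟫ = 0) (hw : ⟪a, w⟫ = 0) : ⟪u, cross3 v w⟫ = 0 := by
  rw [real_inner_eq_dotProduct] at hu hv hw
  rw [inner_cross3]
  refine dotProduct_cross_eq_zero_of_orthogonal ?_ hu hv hw
  rw [← real_inner_eq_dotProduct]
  exact inner_self_ne_zero.mpr ha

theorem cross3_isBilinearMap : IsBilinearMap ℝ cross3 where
  add_left _ _ _ := by simp [cross3]
  smul_left _ _ _ := by simp [cross3]
  add_right _ _ _ := by simp [cross3]
  smul_right _ _ _ := by simp [cross3]

section PartialDerivatives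

variable {F G H : Type*} [NormedAddCommGroup F] [NormedSpace ℝ F] [NormedAddCommGroup G]
  [NormedSpace ℝ G] [NormedAddCommGroup H] [NormedSpace ℝ H]

theorem ContDiff.pd {n : WithTop ℕ∞} {f : E3 → F} (hf : ContDiff ℝ (n + 1) f) (k : Fin 3) :
    ContDiff ℝ n (pd k f) :=
  (hf.fderiv_right le_rfl).clm_apply contDiff_const

theorem pd_comm {f : E3 → F} {x : E3} (hf : ContDiffAt ℝ 2 f x) (i j : Fin 3) :
    pd i (pd j f) x = pd j (pd i f) x := by
  have hf' : DifferentiableAt ℝ (fderiv ℝ f) x :=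
    (hf.fderiv_right le_rfl).differentiableAt one_ne_zero
  have pd_pd (i j : Fin 3) : pd i (pd j f) x
      = fderiv ℝ (fderiv ℝ f) x (EuclideanSpace.single i 1) (EuclideanSpace.single j 1) := by
    unfold pd
    rw [fderiv_clm_apply (c := fderiv ℝ f) hf' (differentiableAt_const _)]
    simp
  rw [pd_pd, pd_pd, hf.isSymmSndFDerivAt (by simp)]

theorem pd_of_bilinear (B : F →L[ℝ] G →L[ℝ] H) {f : E3 → F} {g : E3 → G} {x : E3}
    (hf : DifferentiableAt ℝ f x) (hg : DifferentiableAt ℝ g x) (k : Fin 3) :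
    pd k (fun y => B (f y) (g y)) x = B (pd k f x) (g x) + B (f x) (pd k g x) := by
  simp [pd, B.fderiv_of_bilinear hf hg, add_comm]

end PartialDerivatives

section InnerProduct

variable {F : Type*} [NormedAddCommGroup F] [InnerProductSpace ℝ F]

theorem pd_inner {f g : E3 → F} {x : E3} (hf : DifferentiableAt ℝ f x)
    (hg : DifferentiableAt ℝ g x) (k : Fin 3) :
    pd k (fun y => ⟪f y, g y⟫) x = ⟪pd k f x, g x⟫ + ⟪f x, pd k g x⟫ :=
  pd_of_bilinear (innerSL ℝ) hf hg k

theorem inner_pd_self_eq_zero {f : E3 → F} {x : E3} {c : ℝ} (hf : DifferentiableAt ℝ f x)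
    (hc : ∀ y, ‖f y‖ = c) (k : Fin 3) : ⟪f x, pd k f x⟫ = 0 := by
  have h_const : (fun y => ⟪f y, f y⟫) = fun _ => c ^ 2 := by
    funext y
    rw [real_inner_self_eq_norm_sq, hc]
  have h := pd_inner hf hf k
  rw [h_const, pd, fderiv_const_apply, _root_.zero_apply, real_inner_comm] at h
  linarith

end InnerProduct

theorem pd_inner_cross3 {f g h : E3 → E3} {x : E3} (hf : DifferentiableAt ℝ f x)
    (hg : DifferentiableAt ℝ g x) (hh : DifferentiableAt ℝ h x) (k : Fin 3) :
    pd k (fun y => ⟪f y, cross3 (g y) (h y)⟫) x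
      = ⟪pd k f x, cross3 (g x) (h x)⟫ + ⟪f x, cross3 (pd k g x) (h x)⟫
        + ⟪f x, cross3 (g x) (pd k h x)⟫ := by
  let B := cross3_isBilinearMap.toContinuousBilinearMap
  have hB : pd k (fun y => cross3 (g y) (h y)) x
      = cross3 (pd k g x) (h x) + cross3 (g x) (pd k h x) :=
    pd_of_bilinear B hg hh k
  have hgh : DifferentiableAt ℝ (fun y => cross3 (g y) (h y)) x :=
    (B.hasFDerivAt_of_bilinear hg.hasFDerivAt hh.hasFDerivAt).differentiableAt
  rw [pd_inner hf hgh k, hB, inner_add_right, add_assoc]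

/-- The emergent Gauß law `∇·b = 0` for a unit-length field `m`. -/
theorem emergent_gauss_law (m : E3 → E3) (hm : ContDiff ℝ 2 m)
    (hunit : ∀ x, ‖m x‖ = 1) (x : E3) :
    ∑ i : Fin 3, pd i (fun y => emb m y i) x = 0 := by
  have hm₀ : Differentiable ℝ m := hm.differentiable two_ne_zero
  have hm₁ (k : Fin 3) : Differentiable ℝ (pd k m) := (hm.pd k).differentiable one_ne_zero
  have horth (k : Fin 3) : ⟪m x, pd k m x⟫ = 0 := inner_pd_self_eq_zero (hm₀ x) hunit k
  have hm_ne : m x ≠ 0 := norm_ne_zero_iff.mp (by simp [hunit])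
  have hfirst (i j k : Fin 3) : ⟪pd i m x, cross3 (pd j m x) (pd k m x)⟫ = 0 :=
    inner_cross3_eq_zero_of_orthogonal hm_ne (horth i) (horth j) (horth k)
  rw [Fin.sum_univ_three]
  show pd 0 (fun y => ⟪m y, cross3 (pd 1 m y) (pd 2 m y)⟫) x
    + pd 1 (fun y => ⟪m y, cross3 (pd 2 m y) (pd 0 m y)⟫) x
    + pd 2 (fun y => ⟪m y, cross3 (pd 0 m y) (pd 1 m y)⟫) x = 0
  rw [pd_inner_cross3 (hm₀ x) (hm₁ 1 x) (hm₁ 2 x), pd_inner_cross3 (hm₀ x) (hm₁ 2 x) (hm₁ 0 x),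
    pd_inner_cross3 (hm₀ x) (hm₁ 0 x) (hm₁ 1 x), hfirst, hfirst, hfirst,
    pd_comm hm.contDiffAt 1 0, pd_comm hm.contDiffAt 2 0, pd_comm hm.contDiffAt 2 1]
  linear_combination inner_cross3_swap (m x) (pd 0 (pd 1 m) x) (pd 2 m x)
    + inner_cross3_swap (m x) (pd 0 (pd 2 m) x) (pd 1 m x)
    + inner_cross3_swap (m x) (pd 1 (pd 2 m) x) (pd 0 m x)
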